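/- Let IP be ergodic, shift-invariant, finite range M, satisfying the weak ellipticity condition, with P_0(lim X_n·ℓ = ∞) = 1. Suppose IP_∞ is a probability measure invariant for the environment process (T^{X_n}ω), whose restriction to the sigma-field S_k generated by {ω_x : x·ℓ ≥ k} is absolutely continuous with respect to IP restricted to S_k, for every k ≤ 0. Then for every k ≤ 0, IP_∞ and IP are mutually absolutely continuous on S_k. -/

import Mathlib

open MeasureTheory Filter Set
open scoped ENNReal

noncomputable section

abbrev Zd (d : ℕ) := Fin d → ℤ
abbrev Env (d : ℕ) := Zd d → Zd d → ℝ
abbrev Traj (d : ℕ) := ℕ → Zd d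

/-- shift of the environment by `k`: `(T^k ω) x e = ω (k+x) e`. -/
def shiftE {d : ℕ} (k : Zd d) (ω : Env d) : Env d := fun x e => ω (k + x) e

/-- the sup-norm ball of radius `M` in `ℤ^d`, the set of admissible jumps. -/
def box (d M : ℕ) : Finset (Zd d) := Finset.Icc (fun _ => -(M : ℤ)) (fun _ => (M : ℤ))

/-- scalar product `x · ℓ`. -/
def dotl {d : ℕ} (x : Zd d) (ℓ : Fin d → ℝ) : ℝ := ∑ i, (x i : ℝ) * ℓ i

/-- the local drift in direction `ℓ`: `D(ω)·ℓ`. -/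
def driftl {d : ℕ} (M : ℕ) (ℓ : Fin d → ℝ) (ω : Env d) : ℝ :=
  ∑ e ∈ box d M, dotl e ℓ * ω 0 e

/-- `μ` is the law of the quenched walk in environment `ω` started at `x0`:
a probability measure with `X_0 = x0` a.s., and the Markov property with
transition probabilities `ω i (j - i)` from `i` to `j`. -/
def IsWalk {d : ℕ} (μ : Measure (Traj d)) (ω : Env d) (x0 : Zd d) : Prop :=
  IsProbabilityMeasure μ ∧ μ {w | w 0 = x0} = 1 ∧
  ∀ (n : ℕ) (A : Set (Traj d)), MeasurableSet A →
    (∀ w w' : Traj d, (∀ m ≤ n, w m = w' m) → (w ∈ A ↔ w' ∈ A)) →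
    ∀ i j : Zd d,
      μ (A ∩ {w | w n = i ∧ w (n + 1) = j}) =
        ENNReal.ofReal (ω i (j - i)) * μ (A ∩ {w | w n = i})

/-- a nice environment of range `M`: nonnegative transition probabilities of
total mass one, supported on jumps of sup-norm at most `M`. -/
def GoodEnv {d : ℕ} (M : ℕ) (ω : Env d) : Prop :=
  (∀ x e, 0 ≤ ω x e) ∧ (∀ x, ∑ e ∈ box d M, ω x e = 1) ∧
  (∀ x e, e ∉ box d M → ω x e = 0)

/-- `U` is `M`-connected: there is a path of range `M` through all its points. -/
def MConn {d : ℕ} (M : ℕ) (U : Finset (Zd d)) : Prop :=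
  ∃ (n : ℕ) (p : ℕ → Zd d), (∀ i ≤ n, p i ∈ U) ∧
    (∀ i < n, p (i + 1) - p i ∈ box d M) ∧ (∀ x ∈ U, ∃ i ≤ n, p i = x)

/-- `E^ω_{x0}[Σ_{j=0}^{T_U} 1(X_j = x)]`, the expected number of visits to `x`
before exiting `U`. -/
def exitGreen {d : ℕ} (μ : Measure (Traj d)) (U : Set (Zd d)) (x : Zd d) : ℝ≥0∞ :=
  ∑' j : ℕ, μ {w | w j = x ∧ ∀ m < j, w m ∈ U}

/-- Kalikow's condition in direction `ℓ` with constant `ε`, for the annealed walk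
with environment distribution `IP` and quenched laws `P ω` (started at `0`). -/
def KalikowCond {d : ℕ} (IP : Measure (Env d)) (P : Env d → Measure (Traj d))
    (M : ℕ) (ℓ : Fin d → ℝ) (ε : ℝ) : Prop :=
  0 < ε ∧ ∀ U : Finset (Zd d), (0 : Zd d) ∈ U → MConn M U → ∀ x ∈ U,
    ε * ∫ ω, (exitGreen (P ω) (↑U) x).toReal ∂IP ≤
      ∫ ω, driftl M ℓ (shiftE x ω) * (exitGreen (P ω) (↑U) x).toReal ∂IP

/-- shift invariance of the environment measure. -/
def ShiftInv {d : ℕ} (IP : Measure (Env d)) : Prop :=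
  ∀ k : Zd d, Measure.map (shiftE k) IP = IP

/-- ergodicity of the environment measure under the shifts. -/
def ErgEnv {d : ℕ} (IP : Measure (Env d)) : Prop :=
  ShiftInv IP ∧ ∀ S : Set (Env d), MeasurableSet S →
    (∀ k : Zd d, shiftE k ⁻¹' S = S) → IP S = 0 ∨ IP S = 1

/-- invariance of a measure for the environment process viewed from the particle,
whose kernel is `π(ω, A) = Σ_{|e| ≤ M} π_{0e}(ω) 1_A(T^e ω)`. -/
def EnvInvariant {d : ℕ} (M : ℕ) (IPinf : Measure (Env d)) : Prop :=
  ∀ A : Set (Env d), MeasurableSet A →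
    ∫⁻ ω, ∑ e ∈ box d M, ENNReal.ofReal (ω 0 e) * A.indicator 1 (shiftE e ω) ∂IPinf
      = IPinf A

/-- weak ellipticity in direction `ℓ`: a.s. `π_{0j} > 0` for all unit vectors `j`
with `j·ℓ ≥ 0`. -/
def WeakElliptic {d : ℕ} (IP : Measure (Env d)) (ℓ : Fin d → ℝ) : Prop :=
  ∀ᵐ ω ∂IP, ∀ e : Zd d, (∑ i, (e i) * (e i)) = 1 → 0 ≤ dotl e ℓ → 0 < ω 0 e

/-- the half-space σ-field `S_k = σ(ω_x : x·ℓ ≥ k)`. -/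
def Sfield {d : ℕ} (ℓ : Fin d → ℝ) (k : ℝ) : MeasurableSpace (Env d) :=
  ⨆ x ∈ {x : Zd d | k ≤ dotl x ℓ}, MeasurableSpace.comap (fun ω : Env d => ω x) inferInstance

/-!
Let `f` be the density of `IP_∞` with respect to `IP` on `S_k` and `Y = {f > 0}`, so that
`IP_∞` is carried by `Y` and `IP_∞`-null `S_k`-sets meet `Y` in `IP`-null sets. For a unit
vector `e` with `e·ℓ ≥ 0`, invariance of `IP_∞` forbids the environment process to jump with
positive probability from `Y` to `Yᶜ` along `e`; since `T^e` is `S_k`-measurable, this event is an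
`IP_∞`-null `S_k`-set, so by weak ellipticity `Y ⊆ T^{-e} Y` up to `IP`-null sets, with equality
because `IP` is shift invariant. These shifts generate `ℤ^d`, so `Y` is invariant modulo
`IP`-null sets, and ergodicity together with `IP_∞(Y) = 1` forces `IP(Y) = 1`; hence every
`IP_∞`-null `S_k`-set is `IP`-null.
-/

namespace MeasureTheory.Measure

variable {α : Type*}

theorem exists_measurableSet_forall_measure_eq_zero_iff {m0 : MeasurableSpace α}
    {μ ν : Measure α} [SigmaFinite μ] [SigmaFinite ν] (hνμ : ν ≪ μ) :
    ∃ Y, MeasurableSet Y ∧ ∀ s, ν s = 0 ↔ μ (Y ∩ s) = 0 := by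
  refine ⟨{x | ν.rnDeriv μ x ≠ 0}, (measurable_rnDeriv ν μ (measurableSet_singleton 0)).compl,
    fun s => ?_⟩
  conv_lhs => rw [← withDensity_rnDeriv_eq ν μ hνμ]
  exact withDensity_apply_eq_zero' (measurable_rnDeriv ν μ).aemeasurable

theorem exists_measurableSet_forall_measure_eq_zero_iff_of_le {m m0 : MeasurableSpace α}
    (hm : m ≤ m0) {μ ν : Measure α} [IsFiniteMeasure μ] [IsFiniteMeasure ν]
    (hνμ : ∀ s, MeasurableSet[m] s → μ s = 0 → ν s = 0) :
    ∃ Y, MeasurableSet[m] Y ∧ ∀ s, MeasurableSet[m] s → (ν s = 0 ↔ μ (Y ∩ s) = 0) := by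
  have htrim : ν.trim hm ≪ μ.trim hm := AbsolutelyContinuous.mk fun s hs hs0 => by
    rw [trim_measurableSet_eq hm hs] at hs0 ⊢
    exact hνμ s hs hs0
  obtain ⟨Y, hY, hνY⟩ := exists_measurableSet_forall_measure_eq_zero_iff htrim
  refine ⟨Y, hY, fun s hs => ?_⟩
  rw [← trim_measurableSet_eq hm hs, ← trim_measurableSet_eq hm (hY.inter hs)]
  exact hνY s

end MeasureTheory.Measure

theorem AddSubgroup.eq_top_of_forall_single_one_mem {ι : Type*} [Fintype ι] [DecidableEq ι]
    {H : AddSubgroup (ι → ℤ)} (h : ∀ i, Pi.single i 1 ∈ H) : H = ⊤ := by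
  refine eq_top_iff.mpr fun z _ => ?_
  rw [← Finset.univ_sum_single z]
  refine H.sum_mem fun i _ => ?_
  simpa [← Pi.single_smul] using H.zsmul_mem (h i) (z i)

section Environment

variable {d : ℕ}

theorem dotl_add (ℓ : Fin d → ℝ) (a b : Zd d) : dotl (a + b) ℓ = dotl a ℓ + dotl b ℓ := by
  simp [dotl, add_mul, Finset.sum_add_distrib]

theorem dotl_zero (ℓ : Fin d → ℝ) : dotl (0 : Zd d) ℓ = 0 := by
  simp [dotl]

theorem dotl_single (ℓ : Fin d → ℝ) (i : Fin d) (c : ℤ) :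
    dotl (Pi.single i c) ℓ = c * ℓ i := by
  simp [dotl, Pi.single_apply]

theorem sum_mul_self_single (i : Fin d) (c : ℤ) :
    ∑ j, (Pi.single i c : Zd d) j * (Pi.single i c : Zd d) j = c * c := by
  simp [Pi.single_apply]

theorem shiftE_shiftE (a b : Zd d) (ω : Env d) : shiftE a (shiftE b ω) = shiftE (b + a) ω := by
  funext x e
  simp [shiftE, add_assoc]

theorem shiftE_zero : shiftE (0 : Zd d) = id := by
  funext ω x e
  simp [shiftE]

theorem measurable_shiftE (z : Zd d) : Measurable (shiftE (d := d) z) :=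
  measurable_pi_lambda _ fun x => measurable_pi_apply (z + x)

theorem ShiftInv.quasiMeasurePreserving {IP : Measure (Env d)} (hIP : ShiftInv IP) (z : Zd d) :
    Measure.QuasiMeasurePreserving (shiftE z) IP IP :=
  ⟨measurable_shiftE z, (hIP z).absolutelyContinuous⟩

theorem Sfield_le (ℓ : Fin d → ℝ) (k : ℝ) : Sfield ℓ k ≤ (inferInstance : MeasurableSpace (Env d)) :=
  iSup₂_le fun x _ => (measurable_pi_apply x).comap_le

theorem measurable_apply_Sfield {ℓ : Fin d → ℝ} {k : ℝ} {x : Zd d} (hx : k ≤ dotl x ℓ) :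
    Measurable[Sfield ℓ k] fun ω : Env d => ω x :=
  measurable_iff_comap_le.mpr
    (le_biSup (fun x : Zd d => MeasurableSpace.comap (fun ω : Env d => ω x) inferInstance) hx)

theorem measurable_shiftE_Sfield {ℓ : Fin d → ℝ} {k : ℝ} {e : Zd d} (he : 0 ≤ dotl e ℓ) :
    Measurable[Sfield ℓ k, Sfield ℓ k] (shiftE e) := by
  rw [measurable_iff_comap_le, Sfield]
  simp_rw [MeasurableSpace.comap_iSup, MeasurableSpace.comap_comp]
  refine iSup₂_le fun x (hx : k ≤ dotl x ℓ) => ?_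
  have hex : k ≤ dotl (e + x) ℓ := by rw [dotl_add]; linarith
  exact (measurable_apply_Sfield hex).comap_le

theorem EnvInvariant.measure_pos_inter_shiftE_preimage_eq_zero {M : ℕ} {μ : Measure (Env d)}
    (hμ : EnvInvariant M μ) {B : Set (Env d)} (hB : MeasurableSet B) (hB0 : μ B = 0)
    {e : Zd d} (he : e ∈ box d M) :
    μ ({ω | 0 < ω 0 e} ∩ shiftE e ⁻¹' B) = 0 := by
  set g : Env d → ℝ≥0∞ := fun ω => ENNReal.ofReal (ω 0 e) * B.indicator 1 (shiftE e ω)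
  have hg : Measurable g :=
    (ENNReal.measurable_ofReal.comp ((measurable_pi_apply e).comp (measurable_pi_apply 0))).mul
      ((measurable_one.indicator hB).comp (measurable_shiftE e))
  have hg0 : ∫⁻ ω, g ω ∂μ = 0 := nonpos_iff_eq_zero.mp <| calc
    ∫⁻ ω, g ω ∂μ ≤ ∫⁻ ω, ∑ e' ∈ box d M,
        ENNReal.ofReal (ω 0 e') * B.indicator 1 (shiftE e' ω) ∂μ :=
      lintegral_mono fun ω => Finset.single_le_sum
        (f := fun e' => ENNReal.ofReal (ω 0 e') * B.indicator 1 (shiftE e' ω))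
        (fun _ _ => zero_le) he
    _ = 0 := by rw [hμ B hB, hB0]
  refine measure_mono_null (fun ω ⟨hpos, hω⟩ => ?_) (ae_iff.mp ((lintegral_eq_zero_iff hg).mp hg0))
  simp [g, show shiftE e ω ∈ B from hω, hpos.out]

theorem ErgEnv.measure_eq_zero_or_one_of_ae_invariant {IP : Measure (Env d)} (hIP : ErgEnv IP)
    {Y : Set (Env d)} (hY : MeasurableSet Y) (hinv : ∀ z, shiftE z ⁻¹' Y =ᵐ[IP] Y) :
    IP Y = 0 ∨ IP Y = 1 := by
  set Y' := ⋃ z : Zd d, shiftE z ⁻¹' Y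
  have hY' : Y' =ᵐ[IP] Y := by
    simpa only [Set.iUnion_const] using Filter.EventuallyEq.countable_iUnion hinv
  have hinv' : ∀ j, shiftE j ⁻¹' Y' = Y' := fun j => by
    have hcomp : ∀ z, shiftE z ∘ shiftE j = shiftE (j + z) := fun z => funext (shiftE_shiftE z j)
    simp only [Y', Set.preimage_iUnion, ← Set.preimage_comp, hcomp]
    exact Function.Surjective.iUnion_comp (add_left_surjective j) fun z => shiftE z ⁻¹' Y
  rw [← measure_congr hY']
  exact hIP.2 Y' (MeasurableSet.iUnion fun z => measurable_shiftE z hY) hinv'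

theorem mem_box_of_ae_pos {M : ℕ} {IP : Measure (Env d)} [NeZero IP]
    (hgood : ∀ᵐ ω ∂IP, GoodEnv M ω) {e : Zd d} (hpos : ∀ᵐ ω ∂IP, 0 < ω 0 e) : e ∈ box d M := by
  obtain ⟨ω, hω, hωe⟩ := (hgood.and hpos).exists
  by_contra he
  exact hωe.ne' (hω.2.2 0 e he)

theorem WeakElliptic.ae_pos_single {IP : Measure (Env d)} {ℓ : Fin d → ℝ} (hIP : WeakElliptic IP ℓ)
    {i : Fin d} {c : ℤ} (hc : c * c = 1) (hdot : 0 ≤ c * ℓ i) :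
    ∀ᵐ ω ∂IP, 0 < ω 0 (Pi.single i c) :=
  hIP.mono fun _ h => h _ (by rw [sum_mul_self_single, hc]) (by rwa [dotl_single])

def aeStabilizer {IP : Measure (Env d)} (hIP : ShiftInv IP) (Y : Set (Env d)) :
    AddSubgroup (Zd d) where
  carrier := {z | shiftE z ⁻¹' Y =ᵐ[IP] Y}
  zero_mem' := by
    show shiftE 0 ⁻¹' Y =ᵐ[IP] Y
    rw [shiftE_zero, Set.preimage_id]
    exact .rfl
  add_mem' {a b} ha hb := by
    have hcomp : shiftE (a + b) ⁻¹' Y = shiftE a ⁻¹' (shiftE b ⁻¹' Y) := by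
      ext ω; simp [shiftE_shiftE]
    show shiftE (a + b) ⁻¹' Y =ᵐ[IP] Y
    rw [hcomp]
    exact ((hIP.quasiMeasurePreserving a).preimage_ae_eq hb).trans ha
  neg_mem' {a} ha := by
    have hcomp : shiftE (-a) ⁻¹' (shiftE a ⁻¹' Y) = Y := by
      ext ω; simp [shiftE_shiftE, shiftE_zero]
    have := (hIP.quasiMeasurePreserving (-a)).preimage_ae_eq ha
    rw [hcomp] at this
    exact this.symm

theorem mem_aeStabilizer {IP : Measure (Env d)} {hIP : ShiftInv IP} {Y : Set (Env d)} {z : Zd d} :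
    z ∈ aeStabilizer hIP Y ↔ shiftE z ⁻¹' Y =ᵐ[IP] Y :=
  Iff.rfl

section Support

variable {ℓ : Fin d → ℝ} {k : ℝ} {IP IPinf : Measure (Env d)} {Y : Set (Env d)}

theorem shiftE_mem_aeStabilizer [IsFiniteMeasure IP] {M : ℕ} (hk : k ≤ 0) (hIP : ShiftInv IP)
    (hinv : EnvInvariant M IPinf) (hY : MeasurableSet[Sfield ℓ k] Y)
    (hnull : ∀ s, MeasurableSet[Sfield ℓ k] s → (IPinf s = 0 ↔ IP (Y ∩ s) = 0))
    {e : Zd d} (he : e ∈ box d M) (hdot : 0 ≤ dotl e ℓ) (hpos : ∀ᵐ ω ∂IP, 0 < ω 0 e) :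
    e ∈ aeStabilizer hIP Y := by
  rw [mem_aeStabilizer]
  have hYm : MeasurableSet Y := Sfield_le ℓ k _ hY
  set A := {ω : Env d | 0 < ω 0 e} ∩ shiftE e ⁻¹' Yᶜ
  have hA : MeasurableSet[Sfield ℓ k] A :=
    (((measurable_pi_apply e).comp (measurable_apply_Sfield (by rwa [dotl_zero])))
      measurableSet_Ioi).inter (measurable_shiftE_Sfield hdot hY.compl)
  have hYc : IPinf Yᶜ = 0 := (hnull _ hY.compl).mpr (by simp)
  have hYA : IP (Y ∩ A) = 0 :=
    (hnull A hA).mp (hinv.measure_pos_inter_shiftE_preimage_eq_zero hYm.compl hYc he)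
  have hsub : Y ≤ᵐ[IP] shiftE e ⁻¹' Y := by
    filter_upwards [hpos, measure_eq_zero_iff_ae_notMem.mp hYA] with ω hω hωA hωY
    by_contra h
    exact hωA ⟨hωY, hω, h⟩
  refine (ae_eq_of_ae_subset_of_measure_ge hsub ?_ hYm.nullMeasurableSet (measure_ne_top _ _)).symm
  rw [← Measure.map_apply (measurable_shiftE e) hYm, hIP e]

theorem aeStabilizer_eq_top [IsProbabilityMeasure IP] {M : ℕ} (hk : k ≤ 0) (hIP : ShiftInv IP)
    (hgood : ∀ᵐ ω ∂IP, GoodEnv M ω) (hell : WeakElliptic IP ℓ) (hinv : EnvInvariant M IPinf)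
    (hY : MeasurableSet[Sfield ℓ k] Y)
    (hnull : ∀ s, MeasurableSet[Sfield ℓ k] s → (IPinf s = 0 ↔ IP (Y ∩ s) = 0)) :
    aeStabilizer hIP Y = ⊤ := by
  have hsingle : ∀ i (c : ℤ), c * c = 1 → 0 ≤ c * ℓ i → Pi.single i c ∈ aeStabilizer hIP Y :=
    fun i c hc hdot =>
      have hpos := hell.ae_pos_single hc hdot
      shiftE_mem_aeStabilizer hk hIP hinv hY hnull (mem_box_of_ae_pos hgood hpos)
        (by rwa [dotl_single]) hpos
  refine AddSubgroup.eq_top_of_forall_single_one_mem fun i => ?_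
  rcases le_total 0 (ℓ i) with h | h
  · exact hsingle i 1 (by norm_num) (by simpa using h)
  · rw [← neg_mem_iff, ← Pi.single_neg]
    exact hsingle i (-1) (by norm_num) (by push_cast; linarith)

end Support

end Environment

theorem mutual_ac_on_halfspaces_general {d M : ℕ} (ℓ : Fin d → ℝ)
    (IP : Measure (Env d)) [IsProbabilityMeasure IP]
    (herg : ErgEnv IP) (hgood : ∀ᵐ ω ∂IP, GoodEnv M ω)
    (hell : WeakElliptic IP ℓ)
    (IPinf : Measure (Env d)) [IsProbabilityMeasure IPinf]
    (hinv : EnvInvariant M IPinf)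
    (hac : ∀ k : ℝ, k ≤ 0 → ∀ A : Set (Env d),
      MeasurableSet[Sfield ℓ k] A → IP A = 0 → IPinf A = 0) :
    ∀ k : ℝ, k ≤ 0 → ∀ A : Set (Env d),
      MeasurableSet[Sfield ℓ k] A → (IP A = 0 ↔ IPinf A = 0) := by
  intro k hk A hA
  obtain ⟨Y, hY, hnull⟩ :=
    Measure.exists_measurableSet_forall_measure_eq_zero_iff_of_le (Sfield_le ℓ k) (hac k hk)
  have hYm : MeasurableSet Y := Sfield_le ℓ k _ hY
  have hstab := aeStabilizer_eq_top hk herg.1 hgood hell hinv hY hnull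
  have hYc : IP Yᶜ = 0 := by
    rcases herg.measure_eq_zero_or_one_of_ae_invariant hYm
      (fun z => mem_aeStabilizer.mp (hstab ▸ AddSubgroup.mem_top z)) with hY0 | hY1
    · have hYinf : IPinf Y = 0 := (hnull Y hY).mpr (by rwa [Set.inter_self])
      have hYcinf : IPinf Yᶜ = 0 := (hnull _ hY.compl).mpr (by simp)
      have huniv := measure_union_null hYinf hYcinf
      rw [Set.union_compl_self, measure_univ] at huniv
      exact absurd huniv one_ne_zero
    · rw [measure_compl hYm (measure_ne_top _ _), hY1, measure_univ, tsub_self]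
  rw [hnull A hA, Set.inter_comm, measure_inter_conull hYc]

/-- if `IP` is ergodic, shift invariant, finite range, weakly elliptic,
the walk is transient in direction `ℓ`, and `IP_∞` is an invariant probability
measure for the environment process which is absolutely continuous w.r.t. `IP` on
every half-space σ-field `S_k`, `k ≤ 0`, then `IP_∞` and `IP` are mutually
absolutely continuous on every `S_k`, `k ≤ 0`. -/
theorem mutual_ac_on_halfspaces {d M : ℕ} (ℓ : Fin d → ℝ)
    (IP : Measure (Env d)) [IsProbabilityMeasure IP]
    (herg : ErgEnv IP) (hgood : ∀ᵐ ω ∂IP, GoodEnv M ω)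
    (hell : WeakElliptic IP ℓ)
    (P : Env d → Measure (Traj d)) (hP : ∀ᵐ ω ∂IP, IsWalk (P ω) ω 0)
    (ann : Measure (Traj d))
    (hann : ∀ S : Set (Traj d), MeasurableSet S → ann S = ∫⁻ ω, P ω S ∂IP)
    (htrans : ann {w | Tendsto (fun n => dotl (w n) ℓ) atTop atTop} = 1)
    (IPinf : Measure (Env d)) [IsProbabilityMeasure IPinf]
    (hinv : EnvInvariant M IPinf)
    (hac : ∀ k : ℝ, k ≤ 0 → ∀ A : Set (Env d),
      MeasurableSet[Sfield ℓ k] A → IP A = 0 → IPinf A = 0) :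
    ∀ k : ℝ, k ≤ 0 → ∀ A : Set (Env d),
      MeasurableSet[Sfield ℓ k] A → (IP A = 0 ↔ IPinf A = 0) :=
  mutual_ac_on_halfspaces_general ℓ IP herg hgood hell IPinf hinv hac
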